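/- arXiv:2306.03888 — 2 statements merged into one kernel-verified Lean document; each statement's English description precedes it below -/
import Mathlib

section
/- Let M₂ be the 2×2 matrix over A = 𝔽₂[x^{±1}, y^{±1}, z^{±1}] with first row (z⁻² + y·x⁻¹·z⁻¹, x⁻¹·z⁻¹) and second row (y, 1), and for n ≥ 2 let γ_n ∈ A be the (1,1) entry of M₂^n. Then the monomials with exponent vectors (−1,1,−1), (−n,n,−n) and (0,0,−2n) all appear in γ_n with coefficient 1, and the Newton polytope of γ_n equals the convex hull in ℝ³ of {(−1,1,−1), (−n,n,−n), (0,0,−2n)}. -/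
/-- The Laurent polynomial ring `𝔽₂[x^{±1}, y^{±1}, z^{±1}]`, realized as the group
algebra of `ℤ³` over `𝔽₂`. -/
abbrev LaurentA : Type := AddMonoidAlgebra (ZMod 2) (Fin 3 → ℤ)

/-- The monomial `x^a y^b z^c` corresponding to the exponent vector `(a,b,c) ∈ ℤ³`. -/
noncomputable def lmon (v : Fin 3 → ℤ) : LaurentA := AddMonoidAlgebra.single v 1

/-- The matrix `M₂` with rows `(z⁻² + y·x⁻¹·z⁻¹, x⁻¹·z⁻¹)` and `(y, 1)`. -/
noncomputable def stmtM2 : Matrix (Fin 2) (Fin 2) LaurentA :=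
  !![lmon ![0, 0, -2] + lmon ![-1, 1, -1], lmon ![-1, 0, -1]; lmon ![0, 1, 0], 1]

/-- `γ_n` is the `(1,1)` entry of `M₂ ^ n`. -/
noncomputable def stmtGamma (n : ℕ) : LaurentA := (stmtM2 ^ n) 0 0

-- Auxiliary lemmas

lemma lmon_mul (u v : Fin 3 → ℤ) : lmon u * lmon v = lmon (u + v) := by
  simp [lmon, AddMonoidAlgebra.single_mul_single]

lemma two_eq_zero : (2 : LaurentA) = 0 := by
  have h : (2 : LaurentA) = 1 + 1 := by norm_num
  rw [h, AddMonoidAlgebra.one_def, ← AddMonoidAlgebra.single_add]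
  have : (1 + 1 : ZMod 2) = 0 := by decide
  rw [this, AddMonoidAlgebra.single_zero]

lemma M2_sq : stmtM2 ^ 2 = (lmon ![0,0,-2] + lmon ![-1,1,-1] + 1) • stmtM2
    + lmon ![0,0,-2] • (1 : Matrix (Fin 2) (Fin 2) LaurentA) := by
  have h1 : (![-1,0,-1] : Fin 3 → ℤ) + ![0,1,0] = ![-1,1,-1] := by
    funext i; fin_cases i <;> simp
  have h2 : (![0,1,0] : Fin 3 → ℤ) + ![-1,0,-1] = ![-1,1,-1] := by
    funext i; fin_cases i <;> simp
  ext i j : 1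
  fin_cases i <;> fin_cases j <;>
    simp [pow_two, stmtM2, Matrix.mul_apply, Fin.sum_univ_two, lmon_mul, h1, h2] <;>
    ring_nf <;> simp [two_eq_zero, mul_two] <;> ring_nf <;> simp [two_eq_zero]

lemma gamma_rec (n : ℕ) : stmtGamma (n + 2) =
    (lmon ![0,0,-2] + lmon ![-1,1,-1] + 1) * stmtGamma (n+1)
    + lmon ![0,0,-2] * stmtGamma n := by
  have : stmtM2 ^ (n + 2) = (lmon ![0,0,-2] + lmon ![-1,1,-1] + 1) • stmtM2 ^ (n+1)
      + lmon ![0,0,-2] • stmtM2 ^ n := by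
    rw [pow_add, M2_sq, Matrix.mul_add, Matrix.mul_smul, Matrix.mul_smul, mul_one,
      ← pow_succ]
  simp [stmtGamma, this]

lemma gamma_zero : stmtGamma 0 = 1 := by simp [stmtGamma, Matrix.one_apply]

lemma gamma_one : stmtGamma 1 = lmon ![0,0,-2] + lmon ![-1,1,-1] := by
  simp [stmtGamma, stmtM2]

lemma coeff_step (n : ℕ) (v : Fin 3 → ℤ) :
    (stmtGamma (n+2)).coeff v = (stmtGamma (n+1)).coeff (v - ![0,0,-2]) + (stmtGamma (n+1)).coeff (v - ![-1,1,-1])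
      + (stmtGamma (n+1)).coeff v + (stmtGamma n).coeff (v - ![0,0,-2]) := by
  rw [gamma_rec, add_mul, add_mul, one_mul]
  rw [AddMonoidAlgebra.coeff_add, AddMonoidAlgebra.coeff_add, AddMonoidAlgebra.coeff_add,
    Finsupp.add_apply, Finsupp.add_apply, Finsupp.add_apply]
  rw [lmon, lmon, AddMonoidAlgebra.coeff_single_mul_apply, AddMonoidAlgebra.coeff_single_mul_apply,
    AddMonoidAlgebra.coeff_single_mul_apply, one_mul, one_mul, one_mul, neg_add_eq_sub,
    neg_add_eq_sub]

/-- The support condition. -/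
def Cond (n : ℕ) (v : Fin 3 → ℤ) : Prop :=
  v 0 = -(v 1) ∧ 0 ≤ v 1 ∧ v 1 + v 2 ≤ 0 ∧ v 1 - v 2 ≤ 2*(n:ℤ) ∧
    (v 1 = 0 → v 2 = -(2*(n:ℤ)))

/-- The inductive invariant. -/
def Q (n : ℕ) : Prop :=
  (∀ v : Fin 3 → ℤ, (stmtGamma n).coeff v ≠ 0 → Cond n v) ∧
  (stmtGamma n).coeff ![0, 0, -(2*(n:ℤ))] = 1 ∧
  (stmtGamma n).coeff ![-(n:ℤ), (n:ℤ), -(n:ℤ)] = 1 ∧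
  (1 ≤ n → (stmtGamma n).coeff ![-1,1,-1] = 1)

lemma single_apply' (u v : Fin 3 → ℤ) :
    (AddMonoidAlgebra.single u (1 : ZMod 2)).coeff v = if u = v then 1 else 0 := by
  rw [AddMonoidAlgebra.coeff_single]; exact Finsupp.single_apply

lemma Q_zero : Q 0 := by
  have h0 : (![0, 0, -(2*((0:ℕ):ℤ))] : Fin 3 → ℤ) = 0 := by
    funext i; fin_cases i <;> simp
  have h0' : (![-((0:ℕ):ℤ), ((0:ℕ):ℤ), -((0:ℕ):ℤ)] : Fin 3 → ℤ) = 0 := by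
    funext i; fin_cases i <;> simp
  refine ⟨?_, ?_, ?_, by omega⟩
  · intro v hv
    have : v = 0 := by
      by_contra hne
      rw [gamma_zero, AddMonoidAlgebra.one_def, single_apply'] at hv
      simp [Ne.symm hne] at hv
    subst this
    refine ⟨by simp, by simp, by simp, by simp, by simp⟩
  · rw [h0, gamma_zero, AddMonoidAlgebra.one_def, single_apply']; simp
  · rw [h0', gamma_zero, AddMonoidAlgebra.one_def, single_apply']; simp

lemma Q_one : Q 1 := by
  have hne : (![0,0,-2] : Fin 3 → ℤ) ≠ ![-1,1,-1] := by
    intro h; have := congrFun h 1; simp at this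
  have h1 : (![0, 0, -(2*((1:ℕ):ℤ))] : Fin 3 → ℤ) = ![0,0,-2] := by
    funext i; fin_cases i <;> simp
  have h1' : (![-((1:ℕ):ℤ), ((1:ℕ):ℤ), -((1:ℕ):ℤ)] : Fin 3 → ℤ) = ![-1,1,-1] := by
    funext i; fin_cases i <;> simp
  refine ⟨?_, ?_, ?_, ?_⟩
  · intro v hv
    rw [gamma_one, AddMonoidAlgebra.coeff_add, Finsupp.add_apply, lmon, lmon, single_apply', single_apply'] at hv
    have : (![0,0,-2] : Fin 3 → ℤ) = v ∨ (![-1,1,-1] : Fin 3 → ℤ) = v := by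
      by_contra hc
      push_neg at hc
      simp [hc.1, hc.2] at hv
    rcases this with h | h <;> subst h <;>
      refine ⟨by simp, by simp, by simp, by simp, by simp⟩
  · rw [h1, gamma_one, AddMonoidAlgebra.coeff_add, Finsupp.add_apply, lmon, lmon, single_apply', single_apply',
      if_pos rfl, if_neg (Ne.symm hne)]
    simp
  · rw [h1', gamma_one, AddMonoidAlgebra.coeff_add, Finsupp.add_apply, lmon, lmon, single_apply', single_apply',
      if_neg hne, if_pos rfl]
    simp
  · intro _
    rw [gamma_one, AddMonoidAlgebra.coeff_add, Finsupp.add_apply, lmon, lmon, single_apply', single_apply',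
      if_neg hne, if_pos rfl]
    simp

lemma Q_step (n : ℕ) (h0 : Q n) (h1 : Q (n+1)) : Q (n+2) := by
  obtain ⟨C0, A0, B0, D0⟩ := h0
  obtain ⟨C1, A1, B1, D1⟩ := h1
  constructor
  · -- support condition
    intro v hv
    rw [coeff_step] at hv
    -- last clause first
    have hlast : v 1 = 0 → v 2 = -(2*((n+2:ℕ):ℤ)) := by
      intro h10
      by_contra hne
      -- show all four terms are zero
      have t2 : (stmtGamma (n+1)).coeff (v - ![-1,1,-1]) = 0 := by
        by_contra ht
        have := (C1 _ ht).2.1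
        simp [h10] at this
      by_cases hB : v 2 = -(2*((n+1:ℕ):ℤ))
      · -- cancellation case
        by_cases h00 : v 0 = 0
        · have hveq : v = ![0, 0, -(2*((n+1:ℕ):ℤ))] := by
            funext i; fin_cases i <;> simp [h00, h10, hB]
          have hvA : v - ![0,0,-2] = ![0, 0, -(2*((n:ℕ):ℤ))] := by
            funext i; fin_cases i <;> simp [h00, h10, hB] <;> push_cast <;> ring
          have t1 : (stmtGamma (n+1)).coeff (v - ![0,0,-2]) = 0 := by
            by_contra ht
            have := (C1 _ ht).2.2.2.2
            rw [hvA] at this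
            simp at this <;> omega
          have t3 : (stmtGamma (n+1)).coeff v = 1 := by rw [hveq]; exact A1
          have t4 : (stmtGamma n).coeff (v - ![0,0,-2]) = 1 := by rw [hvA]; exact A0
          rw [t1, t2, t3, t4] at hv
          norm_num at hv
          exact hv (by decide)
        · have t1 : (stmtGamma (n+1)).coeff (v - ![0,0,-2]) = 0 := by
            by_contra ht
            have := (C1 _ ht).1
            simp [h00, h10] at this <;> exact h00 this
          have t3 : (stmtGamma (n+1)).coeff v = 0 := by
            by_contra ht
            have := (C1 _ ht).1
            simp [h10] at this
            exact h00 this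
          have t4 : (stmtGamma n).coeff (v - ![0,0,-2]) = 0 := by
            by_contra ht
            have := (C0 _ ht).1
            simp [h00, h10] at this <;> exact h00 this
          rw [t1, t2, t3, t4] at hv
          simp at hv
      · have t1 : (stmtGamma (n+1)).coeff (v - ![0,0,-2]) = 0 := by
          by_contra ht
          have := (C1 _ ht).2.2.2.2
          simp [h10] at this
          push_cast at this hB hne
          omega
        have t3 : (stmtGamma (n+1)).coeff v = 0 := by
          by_contra ht
          have := (C1 _ ht).2.2.2.2 h10
          push_cast at this hB
          omega
        have t4 : (stmtGamma n).coeff (v - ![0,0,-2]) = 0 := by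
          by_contra ht
          have := (C0 _ ht).2.2.2.2
          simp [h10] at this
          push_cast at this hB
          omega
        rw [t1, t2, t3, t4] at hv
        simp at hv
    -- first four clauses: some term is nonzero
    have hone : (stmtGamma (n+1)).coeff (v - ![0,0,-2]) ≠ 0 ∨ (stmtGamma (n+1)).coeff (v - ![-1,1,-1]) ≠ 0
        ∨ (stmtGamma (n+1)).coeff v ≠ 0 ∨ (stmtGamma n).coeff (v - ![0,0,-2]) ≠ 0 := by
      by_contra hc
      push_neg at hc
      rw [hc.1, hc.2.1, hc.2.2.1, hc.2.2.2] at hv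
      simp at hv
    refine ⟨?_, ?_, ?_, ?_, hlast⟩ <;>
    · rcases hone with ht | ht | ht | ht
      · have := C1 _ ht; rw [Cond] at this; simp at this; push_cast at this ⊢; omega
      · have := C1 _ ht; rw [Cond] at this; simp at this; push_cast at this ⊢; omega
      · have := C1 _ ht; rw [Cond] at this; push_cast at this ⊢; omega
      · have := C0 _ ht; rw [Cond] at this; simp at this; push_cast at this ⊢; omega
  refine ⟨?_, ?_, fun _ => ?_⟩
  · -- a-vertex
    rw [coeff_step]
    have e1 : (![0, 0, -(2*((n+2:ℕ):ℤ))] : Fin 3 → ℤ) - ![0,0,-2]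
        = ![0, 0, -(2*((n+1:ℕ):ℤ))] := by
      funext i; fin_cases i <;> simp <;> push_cast <;> ring
    have t1 : (stmtGamma (n+1)).coeff (![0, 0, -(2*((n+2:ℕ):ℤ))] - ![0,0,-2]) = 1 := by
      rw [e1]; exact A1
    have t2 : (stmtGamma (n+1)).coeff (![0, 0, -(2*((n+2:ℕ):ℤ))] - ![-1,1,-1]) = 0 := by
      by_contra ht
      have := (C1 _ ht).2.1
      simp at this <;> omega
    have t3 : (stmtGamma (n+1)).coeff (![0, 0, -(2*((n+2:ℕ):ℤ))] : Fin 3 → ℤ) = 0 := by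
      by_contra ht
      have := (C1 _ ht).2.2.2.1
      simp at this <;> (push_cast at this; omega)
    have t4 : (stmtGamma n).coeff (![0, 0, -(2*((n+2:ℕ):ℤ))] - ![0,0,-2]) = 0 := by
      by_contra ht
      have := (C0 _ ht).2.2.2.2
      rw [e1] at this
      simp at this <;> (push_cast at this; omega)
    rw [t1, t2, t3, t4]
    simp
  · -- b-vertex
    rw [coeff_step]
    have e1 : (![-((n+2:ℕ):ℤ), ((n+2:ℕ):ℤ), -((n+2:ℕ):ℤ)] : Fin 3 → ℤ) - ![-1,1,-1]
        = ![-((n+1:ℕ):ℤ), ((n+1:ℕ):ℤ), -((n+1:ℕ):ℤ)] := by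
      funext i; fin_cases i <;> simp <;> push_cast <;> ring
    have t1 : (stmtGamma (n+1)).coeff
        (![-((n+2:ℕ):ℤ), ((n+2:ℕ):ℤ), -((n+2:ℕ):ℤ)] - ![0,0,-2]) = 0 := by
      by_contra ht
      have := (C1 _ ht).2.2.1
      simp at this <;> omega
    have t2 : (stmtGamma (n+1)).coeff
        (![-((n+2:ℕ):ℤ), ((n+2:ℕ):ℤ), -((n+2:ℕ):ℤ)] - ![-1,1,-1]) = 1 := by
      rw [e1]; exact B1
    have t3 : (stmtGamma (n+1)).coeff
        (![-((n+2:ℕ):ℤ), ((n+2:ℕ):ℤ), -((n+2:ℕ):ℤ)] : Fin 3 → ℤ) = 0 := by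
      by_contra ht
      have := (C1 _ ht).2.2.2.1
      simp at this <;> (push_cast at this; omega)
    have t4 : (stmtGamma n).coeff
        (![-((n+2:ℕ):ℤ), ((n+2:ℕ):ℤ), -((n+2:ℕ):ℤ)] - ![0,0,-2]) = 0 := by
      by_contra ht
      have := (C0 _ ht).2.2.1
      simp at this <;> omega
    rw [t1, t2, t3, t4]
    simp
  · -- yb-vertex
    rw [coeff_step]
    have t1 : (stmtGamma (n+1)).coeff ((![-1,1,-1] : Fin 3 → ℤ) - ![0,0,-2]) = 0 := by
      by_contra ht
      have := (C1 _ ht).2.2.1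
      simp at this
    have e2 : (![-1,1,-1] : Fin 3 → ℤ) - ![-1,1,-1] = 0 := by simp
    have t2 : (stmtGamma (n+1)).coeff ((![-1,1,-1] : Fin 3 → ℤ) - ![-1,1,-1]) = 0 := by
      rw [e2]
      by_contra ht
      have := (C1 _ ht).2.2.2.2
      simp at this <;> omega
    have t3 : (stmtGamma (n+1)).coeff (![-1,1,-1] : Fin 3 → ℤ) = 1 := D1 (by omega)
    have t4 : (stmtGamma n).coeff ((![-1,1,-1] : Fin 3 → ℤ) - ![0,0,-2]) = 0 := by
      by_contra ht
      have := (C0 _ ht).2.2.1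
      simp at this
    rw [t1, t2, t3, t4]
    simp

lemma Q_all (n : ℕ) : Q n := by
  induction n using Nat.strong_induction_on with
  | _ n ih =>
    match n with
    | 0 => exact Q_zero
    | 1 => exact Q_one
    | (m+2) => exact Q_step m (ih m (by omega)) (ih (m+1) (by omega))

/-- For `n ≥ 2`, the monomials with exponent vectors `(−1,1,−1)`,
`(−n,n,−n)` and `(0,0,−2n)` appear in `γ_n` with coefficient `1`, and the Newton
polytope of `γ_n` (the convex hull in `ℝ³` of its support) is the convex hull of
`{(−1,1,−1), (−n,n,−n), (0,0,−2n)}`. -/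
theorem stmt_10 (n : ℕ) (hn : 2 ≤ n) :
    (stmtGamma n).coeff ![-1, 1, -1] = 1 ∧
    (stmtGamma n).coeff ![-(n : ℤ), (n : ℤ), -(n : ℤ)] = 1 ∧
    (stmtGamma n).coeff ![0, 0, -(2 * (n : ℤ))] = 1 ∧
    convexHull ℝ
        ((fun v : Fin 3 → ℤ => fun k => ((v k : ℤ) : ℝ)) '' ↑(stmtGamma n).coeff.support)
      = convexHull ℝ {(fun k => ((![-1, 1, -1] k : ℤ) : ℝ)),
          (fun k => ((![-(n : ℤ), (n : ℤ), -(n : ℤ)] k : ℤ) : ℝ)),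
          (fun k => ((![0, 0, -(2 * (n : ℤ))] k : ℤ) : ℝ))} := by
  obtain ⟨C, A, B, D⟩ := Q_all n
  refine ⟨D (by omega), B, A, ?_⟩
  set S : Set (Fin 3 → ℝ) := {(fun k => ((![-1, 1, -1] k : ℤ) : ℝ)),
          (fun k => ((![-(n : ℤ), (n : ℤ), -(n : ℤ)] k : ℤ) : ℝ)),
          (fun k => ((![0, 0, -(2 * (n : ℤ))] k : ℤ) : ℝ))} with hS
  have hN2 : (2 : ℝ) ≤ (n : ℝ) := by exact_mod_cast hn
  apply Set.Subset.antisymm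
  · -- hull of support ⊆ hull of triangle
    apply convexHull_min ?_ (convex_convexHull ℝ S)
    rintro p ⟨v, hv, rfl⟩
    have hv' : (stmtGamma n).coeff v ≠ 0 := Finsupp.mem_support_iff.mp hv
    obtain ⟨hc0, hc1, hc2, hc3, hc4⟩ := C v hv'
    -- real versions
    have r0 : ((v 0 : ℤ) : ℝ) = -((v 1 : ℤ) : ℝ) := by exact_mod_cast hc0
    have r1 : (0:ℝ) ≤ (v 1 : ℝ) := by exact_mod_cast hc1
    have r2 : ((v 1 : ℤ) : ℝ) + (v 2 : ℝ) ≤ 0 := by exact_mod_cast hc2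
    have r3 : ((v 1 : ℤ) : ℝ) - (v 2 : ℝ) ≤ 2*(n:ℝ) := by exact_mod_cast hc3
    -- weight 2 integer inequality
    have hW : 2*(n:ℤ) + v 2 ≤ (2*(n:ℤ)-1) * v 1 := by
      rcases eq_or_lt_of_le hc1 with h | h
      · have := hc4 h.symm
        simp [← h, this]
      · have h1le : (1:ℤ) ≤ v 1 := h
        have hmul : 2*(n:ℤ)-1 ≤ (2*(n:ℤ)-1) * v 1 :=
          le_mul_of_one_le_right (by omega) h1le
        linarith
    have rW : 2*(n:ℝ) + (v 2 : ℝ) ≤ (2*(n:ℝ)-1) * ((v 1 : ℤ) : ℝ) := by exact_mod_cast hW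
    set w : Fin 3 → ℝ := ![ (n:ℝ) * (2*(n:ℝ) - (v 1 : ℝ) + (v 2 : ℝ)),
      (2*(n:ℝ)-1)*((v 1 : ℤ) : ℝ) - (2*(n:ℝ) + (v 2 : ℝ)),
      ((n:ℝ)-1) * (-(((v 1 : ℤ) : ℝ) + (v 2 : ℝ))) ] with hw
    set z : Fin 3 → (Fin 3 → ℝ) := ![(fun k => ((![-1, 1, -1] k : ℤ) : ℝ)),
          (fun k => ((![-(n : ℤ), (n : ℤ), -(n : ℤ)] k : ℤ) : ℝ)),
          (fun k => ((![0, 0, -(2 * (n : ℤ))] k : ℤ) : ℝ))] with hz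
    have hw0 : ∀ i ∈ Finset.univ, 0 ≤ w i := by
      intro i _
      fin_cases i <;> simp [hw] <;>
        first
          | linarith
          | nlinarith [r1, r2, r3, rW, hN2]
    have hwsum : ∑ i, w i = 2*(n:ℝ)*((n:ℝ)-1) := by
      rw [Fin.sum_univ_three]
      simp only [hw, Matrix.cons_val_zero, Matrix.cons_val_one, Matrix.head_cons,
        Matrix.cons_val_two, Matrix.tail_cons]
      ring
    have hwpos : 0 < ∑ i, w i := by rw [hwsum]; nlinarith
    have hzS : ∀ i ∈ Finset.univ, z i ∈ S := by
      intro i _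
      fin_cases i <;> simp [hz, hS]
    have hmem := Finset.centerMass_mem_convexHull Finset.univ hw0 hwpos hzS
    have hcm : Finset.univ.centerMass w z = fun k => ((v k : ℤ) : ℝ) := by
      rw [Finset.centerMass, hwsum]
      rw [show (∑ i, w i • z i) = (2*(n:ℝ)*((n:ℝ)-1)) • (fun k => ((v k : ℤ) : ℝ)) from ?_]
      · rw [smul_smul, inv_mul_cancel₀ (by nlinarith), one_smul]
      · rw [Fin.sum_univ_three]
        funext k
        fin_cases k <;> simp [hw, hz] <;> push_cast <;>
          first
            | ring1
            | linear_combination (-2*(n:ℝ)*((n:ℝ)-1)) * r0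
    rw [hcm] at hmem
    exact hmem
  · -- hull of triangle ⊆ hull of support
    apply convexHull_mono
    intro p hp
    rcases hp with h | h | h
    · exact ⟨![-1,1,-1], Finsupp.mem_support_iff.mpr (by rw [D (by omega)]; exact one_ne_zero), h ▸ rfl⟩
    · exact ⟨![-(n:ℤ),(n:ℤ),-(n:ℤ)], Finsupp.mem_support_iff.mpr (by rw [B]; exact one_ne_zero), h ▸ rfl⟩
    · exact ⟨![0,0,-(2*(n:ℤ))], Finsupp.mem_support_iff.mpr (by rw [A]; exact one_ne_zero), h ▸ rfl⟩
end

section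
/- Let d ≥ 3 and let ι : ℤ³ → ℤ^{d−3} be a ℤ-linear map, and define i : ℝ³ → ℝ^d by i(v) = (v, ι(v)) (extending ι ℝ-linearly). For n ≥ 2 let B_n ⊂ ℝ^d be the convex hull of {i(1,−1,0), i(n,−n,0), i(0,0,−2n)} and let C_n ⊂ ℝ^d be the convex hull of {i(−1,1,−1), i(−n,n,−n), i(0,0,−2n)}. Then for any two distinct integers n, m ≥ 2 there is no φ ∈ GL(d,ℤ) mapping ℤ^d ∩ B_n bijectively onto ℤ^d ∩ B_m, and there is no φ ∈ GL(d,ℤ) mapping ℤ^d ∩ C_n bijectively onto ℤ^d ∩ C_m. -/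
/-- Embedding `ℤ³ → ℤ^d` given by `v ↦ (v, ι v)`: the first three coordinates are
those of `v`, and the remaining `d − 3` coordinates are those of `ι v`. -/
def stmtEmb3 (d : ℕ) (ι : (Fin 3 → ℤ) →ₗ[ℤ] (Fin (d - 3) → ℤ)) :
    (Fin 3 → ℤ) → (Fin d → ℤ) := fun v i =>
  if h : (i : ℕ) < 3 then v ⟨(i : ℕ), h⟩
  else ι v ⟨(i : ℕ) - 3, by have := i.isLt; omega⟩

/-- The lattice points of the polytope in `ℝ^d` spanned by the images of three
given exponent vectors in `ℤ³` under the embedding `stmtEmb3 d ι`. -/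
def stmtLatticePts3 (d : ℕ) (ι : (Fin 3 → ℤ) →ₗ[ℤ] (Fin (d - 3) → ℤ))
    (v₁ v₂ v₃ : Fin 3 → ℤ) : Set (Fin d → ℤ) :=
  {p : Fin d → ℤ | (fun k => (p k : ℝ)) ∈
    convexHull ℝ {(fun k => ((stmtEmb3 d ι v₁ k : ℤ) : ℝ)),
                  (fun k => ((stmtEmb3 d ι v₂ k : ℤ) : ℝ)),
                  (fun k => ((stmtEmb3 d ι v₃ k : ℤ) : ℝ))}}

noncomputable def embMat (d : ℕ) (ι : (Fin 3 → ℤ) →ₗ[ℤ] (Fin (d - 3) → ℤ)) :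
    Matrix (Fin d) (Fin 3) ℝ := fun i j =>
  if h : (i : ℕ) < 3 then (if (⟨(i : ℕ), h⟩ : Fin 3) = j then 1 else 0)
  else ((ι (fun k => if j = k then 1 else 0) ⟨(i : ℕ) - 3, by have := i.isLt; omega⟩ : ℤ) : ℝ)

theorem emb_cast (d : ℕ) (ι : (Fin 3 → ℤ) →ₗ[ℤ] (Fin (d - 3) → ℤ)) (v : Fin 3 → ℤ) :
    (fun k => ((stmtEmb3 d ι v k : ℤ) : ℝ)) =
      (embMat d ι).mulVec (fun j => ((v j : ℤ) : ℝ)) := by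
  funext k
  simp only [stmtEmb3, embMat, Matrix.mulVec, dotProduct]
  split
  · next h =>
    rw [Finset.sum_eq_single (⟨(k : ℕ), h⟩ : Fin 3)] <;> simp +contextual [eq_comm]
  · next h =>
    rw [LinearMap.pi_apply_eq_sum_univ ι v]
    push_cast
    simp only [Finset.sum_apply, Pi.smul_apply, smul_eq_mul]
    push_cast
    exact Finset.sum_congr rfl fun j _ => by ring

theorem mulVec_coord (d : ℕ) (ι : (Fin 3 → ℤ) →ₗ[ℤ] (Fin (d - 3) → ℤ))
    (x : Fin 3 → ℝ) (i : Fin d) (h : (i : ℕ) < 3) :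
    (embMat d ι).mulVec x i = x ⟨(i : ℕ), h⟩ := by
  simp only [embMat, Matrix.mulVec, dotProduct]
  rw [Finset.sum_eq_single (⟨(i : ℕ), h⟩ : Fin 3)] <;> simp +contextual [eq_comm, h]

theorem latticePts_eq (d : ℕ) (hd : 3 ≤ d) (ι : (Fin 3 → ℤ) →ₗ[ℤ] (Fin (d - 3) → ℤ))
    (v₁ v₂ v₃ : Fin 3 → ℤ) :
    stmtLatticePts3 d ι v₁ v₂ v₃ =
      stmtEmb3 d ι '' {q : Fin 3 → ℤ | (fun j => ((q j : ℤ) : ℝ)) ∈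
        convexHull ℝ {(fun j => ((v₁ j : ℤ) : ℝ)), (fun j => ((v₂ j : ℤ) : ℝ)),
          (fun j => ((v₃ j : ℤ) : ℝ))}} := by
  have himg : convexHull ℝ {(fun k => ((stmtEmb3 d ι v₁ k : ℤ) : ℝ)),
                  (fun k => ((stmtEmb3 d ι v₂ k : ℤ) : ℝ)),
                  (fun k => ((stmtEmb3 d ι v₃ k : ℤ) : ℝ))} =
      (embMat d ι).mulVecLin '' convexHull ℝ {(fun j => ((v₁ j : ℤ) : ℝ)),
        (fun j => ((v₂ j : ℤ) : ℝ)), (fun j => ((v₃ j : ℤ) : ℝ))} := by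
    rw [LinearMap.image_convexHull]
    congr 1
    simp only [Set.image_insert_eq, Set.image_singleton, Matrix.mulVecLin_apply]
    rw [emb_cast d ι v₁, emb_cast d ι v₂, emb_cast d ι v₃]
  ext p
  simp only [stmtLatticePts3, Set.mem_setOf_eq, himg, Set.mem_image]
  constructor
  · rintro ⟨x, hx, hpx⟩
    rw [Matrix.mulVecLin_apply] at hpx
    have hxq : x = fun (j : Fin 3) => ((p ⟨(j : ℕ), lt_of_lt_of_le j.isLt hd⟩ : ℤ) : ℝ) := by
      funext j
      have := congrFun hpx ⟨(j : ℕ), lt_of_lt_of_le j.isLt hd⟩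
      rw [mulVec_coord d ι x _ (by simp [j.isLt])] at this
      simpa using this
    set q : Fin 3 → ℤ := fun j => p ⟨(j : ℕ), lt_of_lt_of_le j.isLt hd⟩ with hq
    refine ⟨q, by rwa [hxq] at hx, ?_⟩
    have h2 : (embMat d ι).mulVec (fun j => ((q j : ℤ) : ℝ)) =
        fun k => ((stmtEmb3 d ι q k : ℤ) : ℝ) := (emb_cast d ι q).symm
    rw [hxq] at hpx
    have h3 : (fun k => ((stmtEmb3 d ι q k : ℤ) : ℝ)) = (fun k => ((p k : ℤ) : ℝ)) := by
      rw [← h2, ← hpx]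
    funext k
    exact_mod_cast congrFun h3 k
  · rintro ⟨q, hq, rfl⟩
    exact ⟨fun j => ((q j : ℤ) : ℝ), hq, by
      rw [Matrix.mulVecLin_apply, ← emb_cast d ι q]⟩

theorem mem_hull3 {E : Type*} [AddCommGroup E] [Module ℝ E] (w₁ w₂ w₃ p : E) :
    p ∈ convexHull ℝ {w₁, w₂, w₃} ↔
      ∃ a b c : ℝ, 0 ≤ a ∧ 0 ≤ b ∧ 0 ≤ c ∧ a + b + c = 1 ∧
        a • w₁ + b • w₂ + c • w₃ = p := by
  constructor
  · intro hp
    rw [convexHull_insert (by simp : ({w₂, w₃} : Set E).Nonempty), mem_convexJoin] at hp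
    obtain ⟨x, hx, y, hy, hseg⟩ := hp
    rw [Set.mem_singleton_iff] at hx
    subst hx
    rw [convexHull_pair] at hy
    obtain ⟨s, t, hs, ht, hst, rfl⟩ := hy
    obtain ⟨u, v, hu, hv, huv, rfl⟩ := hseg
    refine ⟨u, v * s, v * t, hu, by positivity, by positivity, by nlinarith, ?_⟩
    simp only [smul_add, smul_smul]
    abel
  · rintro ⟨a, b, c, ha, hb, hc, habc, rfl⟩
    have := Convex.sum_mem (convex_convexHull ℝ {w₁, w₂, w₃})
      (t := Finset.univ) (w := ![a, b, c]) (z := ![w₁, w₂, w₃])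
      (by intro i _; fin_cases i <;> simpa)
      (by simp [Fin.sum_univ_three]; linarith)
      (by intro i _; fin_cases i <;> simp [subset_convexHull] <;>
            exact subset_convexHull ℝ _ (by simp))
    simpa [Fin.sum_univ_three] using this

theorem hullB (n : ℕ) (hn : 2 ≤ n) (q : Fin 3 → ℤ) :
    ((fun j => ((q j : ℤ) : ℝ)) ∈
      convexHull ℝ {(fun j => ((![1, -1, 0] j : ℤ) : ℝ)),
        (fun j => ((![(n : ℤ), -(n : ℤ), 0] j : ℤ) : ℝ)),
        (fun j => ((![0, 0, -(2 * (n : ℤ))] j : ℤ) : ℝ))}) ↔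
      (q 1 = -q 0 ∧ 0 ≤ q 0 ∧ q 0 ≤ (n : ℤ) ∧ 2 * q 0 - 2 * n ≤ q 2 ∧ q 2 ≤ 0 ∧
        q 2 ≤ 2 * n * q 0 - 2 * n) := by
  rw [mem_hull3]
  have hN : (2 : ℝ) ≤ (n : ℝ) := by exact_mod_cast hn
  have hN0 : (0 : ℝ) ≤ (n : ℝ) := by linarith
  have hN1 : (0 : ℝ) ≤ (n : ℝ) - 1 := by linarith
  constructor
  · rintro ⟨a, b, c, ha, hb, hc, habc, heq⟩
    have h0 := congrFun heq 0
    have h1 := congrFun heq 1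
    have h2 := congrFun heq 2
    simp only [Pi.add_apply, Pi.smul_apply, Matrix.cons_val_zero, Matrix.cons_val_one,
      Matrix.head_cons, smul_eq_mul] at h0 h1 h2
    norm_num at h0 h1 h2
    push_cast at h0 h1 h2
    refine ⟨?_, ?_, ?_, ?_, ?_, ?_⟩
    · exact_mod_cast (by linarith : ((q 1 : ℤ) : ℝ) = -((q 0 : ℤ) : ℝ))
    · exact_mod_cast (by nlinarith [mul_nonneg hb hN0] : (0:ℝ) ≤ ((q 0 : ℤ) : ℝ))
    · exact_mod_cast (by nlinarith [mul_nonneg ha hN1, mul_nonneg hc hN0] :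
        ((q 0 : ℤ) : ℝ) ≤ (n : ℝ))
    · exact_mod_cast (by nlinarith [mul_nonneg ha hN1] :
        2 * ((q 0 : ℤ) : ℝ) - 2 * (n : ℝ) ≤ ((q 2 : ℤ) : ℝ))
    · exact_mod_cast (by nlinarith [mul_nonneg hc hN0] : ((q 2 : ℤ) : ℝ) ≤ 0)
    · exact_mod_cast (by nlinarith [mul_nonneg (mul_nonneg hb hN0) hN1] :
        ((q 2 : ℤ) : ℝ) ≤ 2 * (n : ℝ) * ((q 0 : ℤ) : ℝ) - 2 * (n : ℝ))
  · rintro ⟨hy, hx0, hxn, hz1, hz2, hz3⟩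
    have hNpos : (0 : ℝ) < (n : ℝ) := by linarith
    have hN1pos : (0 : ℝ) < (n : ℝ) - 1 := by linarith
    have hz1' : 2 * ((q 0 : ℤ) : ℝ) - 2 * (n : ℝ) ≤ ((q 2 : ℤ) : ℝ) := by exact_mod_cast hz1
    have hz2' : ((q 2 : ℤ) : ℝ) ≤ 0 := by exact_mod_cast hz2
    have hz3' : ((q 2 : ℤ) : ℝ) ≤ 2 * (n : ℝ) * ((q 0 : ℤ) : ℝ) - 2 * (n : ℝ) := by
      exact_mod_cast hz3
    have hy' : ((q 1 : ℤ) : ℝ) = -((q 0 : ℤ) : ℝ) := by exact_mod_cast hy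
    refine ⟨(2 * (n : ℝ) - 2 * ((q 0 : ℤ) : ℝ) + ((q 2 : ℤ) : ℝ)) / (2 * ((n : ℝ) - 1)),
      (2 * (n : ℝ) * ((q 0 : ℤ) : ℝ) - 2 * (n : ℝ) - ((q 2 : ℤ) : ℝ)) / (2 * (n : ℝ) * ((n : ℝ) - 1)),
      -((q 2 : ℤ) : ℝ) / (2 * (n : ℝ)),
      div_nonneg (by linarith) (by linarith),
      div_nonneg (by linarith) (by positivity),
      div_nonneg (by linarith) (by linarith), ?_, ?_⟩
    · field_simp
      ring
    · funext j
      fin_cases j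
      · simp only [Pi.add_apply, Pi.smul_apply, Matrix.cons_val_zero, smul_eq_mul]
        push_cast
        field_simp
        ring
      · simp only [Pi.add_apply, Pi.smul_apply, Matrix.cons_val_one, Matrix.head_cons,
          smul_eq_mul]
        push_cast
        rw [hy']
        field_simp
        ring
      · simp only [Pi.add_apply, Pi.smul_apply, smul_eq_mul]
        norm_num
        push_cast
        field_simp

theorem hullC (n : ℕ) (hn : 2 ≤ n) (q : Fin 3 → ℤ) :
    ((fun j => ((q j : ℤ) : ℝ)) ∈
      convexHull ℝ {(fun j => ((![-1, 1, -1] j : ℤ) : ℝ)),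
        (fun j => ((![-(n : ℤ), (n : ℤ), -(n : ℤ)] j : ℤ) : ℝ)),
        (fun j => ((![0, 0, -(2 * (n : ℤ))] j : ℤ) : ℝ))}) ↔
      (q 1 = -q 0 ∧ -(n : ℤ) ≤ q 0 ∧ q 0 ≤ 0 ∧ -q 0 - 2 * n ≤ q 2 ∧ q 2 ≤ q 0 ∧
        q 2 ≤ (1 - 2 * n) * q 0 - 2 * n) := by
  rw [mem_hull3]
  have hN : (2 : ℝ) ≤ (n : ℝ) := by exact_mod_cast hn
  have hN0 : (0 : ℝ) ≤ (n : ℝ) := by linarith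
  have hN1 : (0 : ℝ) ≤ (n : ℝ) - 1 := by linarith
  constructor
  · rintro ⟨a, b, c, ha, hb, hc, habc, heq⟩
    have h0 := congrFun heq 0
    have h1 := congrFun heq 1
    have h2 := congrFun heq 2
    simp only [Pi.add_apply, Pi.smul_apply, Matrix.cons_val_zero, Matrix.cons_val_one,
      Matrix.head_cons, smul_eq_mul] at h0 h1 h2
    norm_num at h0 h1 h2
    push_cast at h0 h1 h2
    refine ⟨?_, ?_, ?_, ?_, ?_, ?_⟩
    · exact_mod_cast (by linarith : ((q 1 : ℤ) : ℝ) = -((q 0 : ℤ) : ℝ))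
    · exact_mod_cast (by nlinarith [mul_nonneg ha hN1, mul_nonneg hc hN0] :
        -(n : ℝ) ≤ ((q 0 : ℤ) : ℝ))
    · exact_mod_cast (by nlinarith [mul_nonneg hb hN0] : ((q 0 : ℤ) : ℝ) ≤ 0)
    · exact_mod_cast (by nlinarith [mul_nonneg ha hN1] :
        -((q 0 : ℤ) : ℝ) - 2 * (n : ℝ) ≤ ((q 2 : ℤ) : ℝ))
    · exact_mod_cast (by nlinarith [mul_nonneg hc hN0] : ((q 2 : ℤ) : ℝ) ≤ ((q 0 : ℤ) : ℝ))
    · exact_mod_cast (by nlinarith [mul_nonneg (mul_nonneg hb hN0) hN1] :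
        ((q 2 : ℤ) : ℝ) ≤ (1 - 2 * (n : ℝ)) * ((q 0 : ℤ) : ℝ) - 2 * (n : ℝ))
  · rintro ⟨hy, hx0, hxn, hz1, hz2, hz3⟩
    have hNpos : (0 : ℝ) < (n : ℝ) := by linarith
    have hN1pos : (0 : ℝ) < (n : ℝ) - 1 := by linarith
    have hz1' : -((q 0 : ℤ) : ℝ) - 2 * (n : ℝ) ≤ ((q 2 : ℤ) : ℝ) := by exact_mod_cast hz1
    have hz2' : ((q 2 : ℤ) : ℝ) ≤ ((q 0 : ℤ) : ℝ) := by exact_mod_cast hz2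
    have hz3' : ((q 2 : ℤ) : ℝ) ≤ (1 - 2 * (n : ℝ)) * ((q 0 : ℤ) : ℝ) - 2 * (n : ℝ) := by
      exact_mod_cast hz3
    have hy' : ((q 1 : ℤ) : ℝ) = -((q 0 : ℤ) : ℝ) := by exact_mod_cast hy
    refine ⟨(2 * (n : ℝ) + ((q 0 : ℤ) : ℝ) + ((q 2 : ℤ) : ℝ)) / (2 * ((n : ℝ) - 1)),
      ((1 - 2 * (n : ℝ)) * ((q 0 : ℤ) : ℝ) - 2 * (n : ℝ) - ((q 2 : ℤ) : ℝ)) /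
        (2 * (n : ℝ) * ((n : ℝ) - 1)),
      (((q 0 : ℤ) : ℝ) - ((q 2 : ℤ) : ℝ)) / (2 * (n : ℝ)),
      div_nonneg (by linarith) (by linarith),
      div_nonneg (by linarith) (by positivity),
      div_nonneg (by linarith) (by linarith), ?_, ?_⟩
    · field_simp
      ring
    · funext j
      fin_cases j
      · simp only [Pi.add_apply, Pi.smul_apply, Matrix.cons_val_zero, smul_eq_mul]
        push_cast
        field_simp
        ring
      · simp only [Pi.add_apply, Pi.smul_apply, Matrix.cons_val_one, Matrix.head_cons,
          smul_eq_mul]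
        push_cast
        rw [hy']
        field_simp
        ring
      · simp only [Pi.add_apply, Pi.smul_apply, smul_eq_mul]
        norm_num
        push_cast
        field_simp
        ring

theorem sum_odds (n : ℕ) : ∑ k ∈ Finset.range n, (2 * k + 1) = n ^ 2 := by
  induction n with
  | zero => simp
  | succ n ih => rw [Finset.sum_range_succ, ih]; ring

theorem sum_counts (n : ℕ) : ∑ k ∈ Finset.range n, (2 * n - 2 * k - 1) = n ^ 2 := by
  rw [← sum_odds n, ← Finset.sum_range_reflect]
  exact Finset.sum_congr rfl fun k hk => by
    have := Finset.mem_range.mp hk; omega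

noncomputable def PBf (n : ℕ) : Finset (ℤ × ℤ) :=
  insert ((0 : ℤ), -2 * (n : ℤ))
    ((Finset.range n).biUnion fun k =>
      (Finset.Icc (2 * ((k : ℤ) + 1) - 2 * n) 0).image fun z => (((k : ℤ) + 1), z))

noncomputable def PCf (n : ℕ) : Finset (ℤ × ℤ) :=
  insert ((0 : ℤ), -2 * (n : ℤ))
    ((Finset.range n).biUnion fun k =>
      (Finset.Icc (((k : ℤ) + 1) - 2 * n) (-((k : ℤ) + 1))).image fun z =>
        ((-((k : ℤ) + 1)), z))

theorem card_aux (n : ℕ) (f : ℕ → ℤ) (lo hi : ℕ → ℤ)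
    (hinj : ∀ k, ∀ a b : ℤ, (f k, a) = (f k, b) → a = b)
    (hne : ∀ k z, ((0 : ℤ), -2 * (n : ℤ)) ≠ (f k, z))
    (hf : ∀ i j, i < n → j < n → f i = f j → i = j)
    (hcard : ∀ k < n, (hi k + 1 - lo k).toNat = 2 * n - 2 * k - 1) :
    (insert ((0 : ℤ), -2 * (n : ℤ))
      ((Finset.range n).biUnion fun k =>
        (Finset.Icc (lo k) (hi k)).image fun z => (f k, z))).card = n ^ 2 + 1 := by
  rw [Finset.card_insert_of_notMem (by
    simp only [Finset.mem_biUnion, Finset.mem_image, Finset.mem_Icc]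
    rintro ⟨k, hk, z, hz, h⟩
    exact hne k z h.symm)]
  rw [Finset.card_biUnion (by
    intro i hi' j hj' hij
    simp only [Finset.disjoint_left, Finset.mem_image, Finset.mem_Icc]
    rintro p ⟨z, hz, rfl⟩ ⟨w, hw, h⟩
    exact hij (hf j i (Finset.mem_range.mp hj') (Finset.mem_range.mp hi')
      (congrArg Prod.fst h)).symm)]
  have : ∀ k ∈ Finset.range n,
      ((Finset.Icc (lo k) (hi k)).image fun z => (f k, z)).card = 2 * n - 2 * k - 1 := by
    intro k hk
    rw [Finset.card_image_of_injective _ (fun a b h => hinj k a b (by simpa using h)),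
      Int.card_Icc]
    exact hcard k (Finset.mem_range.mp hk)
  rw [Finset.sum_congr rfl this, sum_counts]

theorem card_PBf (n : ℕ) : (PBf n).card = n ^ 2 + 1 := by
  refine card_aux n (fun k => (k : ℤ) + 1) (fun k => 2 * ((k : ℤ) + 1) - 2 * n) (fun _ => 0)
    (fun k a b h => by simpa using h)
    (fun k z h => by have := congrArg Prod.fst h; simp at this; omega)
    (fun i j _ _ h => by
      have h' : (i : ℤ) + 1 = (j : ℤ) + 1 := h
      exact_mod_cast (by omega : (i : ℤ) = j))
    (fun k hk => by
      show ((0 : ℤ) + 1 - (2 * ((k : ℤ) + 1) - 2 * n)).toNat = 2 * n - 2 * k - 1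
      omega)

theorem card_PCf (n : ℕ) : (PCf n).card = n ^ 2 + 1 := by
  refine card_aux n (fun k => -((k : ℤ) + 1)) (fun k => ((k : ℤ) + 1) - 2 * n)
    (fun k => -((k : ℤ) + 1))
    (fun k a b h => by simpa using h)
    (fun k z h => by have := congrArg Prod.fst h; simp at this; omega)
    (fun i j _ _ h => by
      have h' : -((i : ℤ) + 1) = -((j : ℤ) + 1) := h
      exact_mod_cast (by omega : (i : ℤ) = j))
    (fun k hk => by
      show (-((k : ℤ) + 1) + 1 - (((k : ℤ) + 1) - 2 * n)).toNat = 2 * n - 2 * k - 1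
      omega)

theorem SB_eq (n : ℕ) (hn : 2 ≤ n) :
    {q : Fin 3 → ℤ | q 1 = -q 0 ∧ 0 ≤ q 0 ∧ q 0 ≤ (n : ℤ) ∧ 2 * q 0 - 2 * n ≤ q 2 ∧
        q 2 ≤ 0 ∧ q 2 ≤ 2 * n * q 0 - 2 * n} =
      ↑((PBf n).image fun xz : ℤ × ℤ => ![xz.1, -xz.1, xz.2]) := by
  ext q
  simp only [Set.mem_setOf_eq, Finset.coe_image, Set.mem_image, Finset.mem_coe, PBf,
    Finset.mem_insert, Finset.mem_biUnion, Finset.mem_range, Finset.mem_image, Finset.mem_Icc]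
  constructor
  · rintro ⟨hy, hx0, hxn, hz1, hz2, hz3⟩
    by_cases h : q 0 = 0
    · have hq2 : q 2 = -2 * (n : ℤ) := by
        rw [h] at hz3 hz1
        simp only [mul_zero] at hz3
        omega
      exact ⟨(0, -2 * (n : ℤ)), Or.inl rfl, by
        funext j; fin_cases j <;> simp [h, hy, hq2]⟩
    · have hx1 : 1 ≤ q 0 := by omega
      refine ⟨(q 0, q 2), Or.inr ⟨(q 0).toNat - 1, by omega, q 2, ⟨by
        have : ((((q 0).toNat - 1 : ℕ)) : ℤ) + 1 = q 0 := by omega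
        rw [this]; exact hz1, hz2⟩, by
        have : ((((q 0).toNat - 1 : ℕ)) : ℤ) + 1 = q 0 := by omega
        rw [this]⟩, by funext j; fin_cases j <;> simp [hy]⟩
  · rintro ⟨⟨x, z⟩, hmem, rfl⟩
    simp only [Matrix.cons_val_zero, Matrix.cons_val_one, Matrix.head_cons]
    have h2 : ![x, -x, z] 2 = z := rfl
    rw [h2]
    rcases hmem with heq | ⟨k, hk, w, hw, heq⟩
    · rw [Prod.mk.injEq] at heq
      obtain ⟨rfl, rfl⟩ := heq
      refine ⟨by trivial, le_refl _, by positivity, by omega, by omega, by simp⟩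
    · rw [Prod.mk.injEq] at heq
      obtain ⟨rfl, rfl⟩ := heq
      have hkn : (0 : ℤ) ≤ 2 * (n : ℤ) * k := by positivity
      refine ⟨by trivial, by omega, by omega, by omega, by omega, ?_⟩
      have : 2 * (n : ℤ) * ((k : ℤ) + 1) - 2 * n = 2 * (n : ℤ) * k := by ring
      rw [this]
      omega

theorem SC_eq (n : ℕ) (hn : 2 ≤ n) :
    {q : Fin 3 → ℤ | q 1 = -q 0 ∧ -(n : ℤ) ≤ q 0 ∧ q 0 ≤ 0 ∧ -q 0 - 2 * n ≤ q 2 ∧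
        q 2 ≤ q 0 ∧ q 2 ≤ (1 - 2 * n) * q 0 - 2 * n} =
      ↑((PCf n).image fun xz : ℤ × ℤ => ![xz.1, -xz.1, xz.2]) := by
  ext q
  simp only [Set.mem_setOf_eq, Finset.coe_image, Set.mem_image, Finset.mem_coe, PCf,
    Finset.mem_insert, Finset.mem_biUnion, Finset.mem_range, Finset.mem_image, Finset.mem_Icc]
  constructor
  · rintro ⟨hy, hx0, hxn, hz1, hz2, hz3⟩
    by_cases h : q 0 = 0
    · have hq2 : q 2 = -2 * (n : ℤ) := by
        rw [h] at hz3 hz1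
        simp only [mul_zero] at hz3
        omega
      exact ⟨(0, -2 * (n : ℤ)), Or.inl rfl, by
        funext j; fin_cases j <;> simp [h, hy, hq2]⟩
    · have hx1 : q 0 ≤ -1 := by omega
      have hcast : -(((((-q 0).toNat - 1 : ℕ)) : ℤ) + 1) = q 0 := by omega
      refine ⟨(q 0, q 2), Or.inr ⟨(-q 0).toNat - 1, by omega, q 2, ⟨by omega, by omega⟩,
        by rw [hcast]⟩, by funext j; fin_cases j <;> simp [hy]⟩
  · rintro ⟨⟨x, z⟩, hmem, rfl⟩
    simp only [Matrix.cons_val_zero, Matrix.cons_val_one, Matrix.head_cons]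
    have h2 : ![x, -x, z] 2 = z := rfl
    rw [h2]
    rcases hmem with heq | ⟨k, hk, w, hw, heq⟩
    · rw [Prod.mk.injEq] at heq
      obtain ⟨rfl, rfl⟩ := heq
      refine ⟨by trivial, by omega, le_refl _, by omega, by omega, by simp⟩
    · rw [Prod.mk.injEq] at heq
      obtain ⟨rfl, rfl⟩ := heq
      have hkn : (0 : ℤ) ≤ 2 * (n : ℤ) * k := by positivity
      refine ⟨by trivial, by omega, by omega, by omega, by omega, ?_⟩
      have hr : (1 - 2 * (n : ℤ)) * (-((k : ℤ) + 1)) - 2 * n =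
          -((k : ℤ) + 1) + 2 * (n : ℤ) * k := by ring
      rw [hr]
      linarith [hw.2]

theorem emb_inj (d : ℕ) (hd : 3 ≤ d) (ι : (Fin 3 → ℤ) →ₗ[ℤ] (Fin (d - 3) → ℤ)) :
    Function.Injective (stmtEmb3 d ι) := by
  intro v w h
  funext j
  have hj := congrFun h ⟨(j : ℕ), lt_of_lt_of_le j.isLt hd⟩
  simp only [stmtEmb3] at hj
  rw [dif_pos (j.isLt : ((⟨(j : ℕ), lt_of_lt_of_le j.isLt hd⟩ : Fin d) : ℕ) < 3),
    dif_pos (j.isLt : ((⟨(j : ℕ), lt_of_lt_of_le j.isLt hd⟩ : Fin d) : ℕ) < 3)] at hj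
  simpa using hj

theorem pairmap_inj : Function.Injective (fun xz : ℤ × ℤ => ![xz.1, -xz.1, xz.2]) := by
  rintro ⟨a, b⟩ ⟨c, e⟩ h
  have h0 := congrFun h 0
  have h2 := congrFun h 2
  simp only [Matrix.cons_val_zero] at h0
  have h2' : a = c ∧ b = e := ⟨h0, h2⟩
  simp [Prod.ext_iff, h2'.1, h2'.2]

theorem ncard_B (d : ℕ) (hd : 3 ≤ d) (ι : (Fin 3 → ℤ) →ₗ[ℤ] (Fin (d - 3) → ℤ))
    (n : ℕ) (hn : 2 ≤ n) :
    (stmtLatticePts3 d ι ![1, -1, 0] ![(n : ℤ), -(n : ℤ), 0]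
      ![0, 0, -(2 * (n : ℤ))]).ncard = n ^ 2 + 1 := by
  have setEq : {q : Fin 3 → ℤ | (fun j => ((q j : ℤ) : ℝ)) ∈
      convexHull ℝ {(fun j => ((![1, -1, 0] j : ℤ) : ℝ)),
        (fun j => ((![(n : ℤ), -(n : ℤ), 0] j : ℤ) : ℝ)),
        (fun j => ((![0, 0, -(2 * (n : ℤ))] j : ℤ) : ℝ))}} =
      ↑((PBf n).image fun xz : ℤ × ℤ => ![xz.1, -xz.1, xz.2]) := by
    rw [← SB_eq n hn]
    ext q
    exact hullB n hn q
  rw [latticePts_eq d hd ι, setEq,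
    Set.ncard_image_of_injective _ (emb_inj d hd ι), Set.ncard_coe_finset,
    Finset.card_image_of_injective _ pairmap_inj, card_PBf]

theorem ncard_C (d : ℕ) (hd : 3 ≤ d) (ι : (Fin 3 → ℤ) →ₗ[ℤ] (Fin (d - 3) → ℤ))
    (n : ℕ) (hn : 2 ≤ n) :
    (stmtLatticePts3 d ι ![-1, 1, -1] ![-(n : ℤ), (n : ℤ), -(n : ℤ)]
      ![0, 0, -(2 * (n : ℤ))]).ncard = n ^ 2 + 1 := by
  have setEq : {q : Fin 3 → ℤ | (fun j => ((q j : ℤ) : ℝ)) ∈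
      convexHull ℝ {(fun j => ((![-1, 1, -1] j : ℤ) : ℝ)),
        (fun j => ((![-(n : ℤ), (n : ℤ), -(n : ℤ)] j : ℤ) : ℝ)),
        (fun j => ((![0, 0, -(2 * (n : ℤ))] j : ℤ) : ℝ))}} =
      ↑((PCf n).image fun xz : ℤ × ℤ => ![xz.1, -xz.1, xz.2]) := by
    rw [← SC_eq n hn]
    ext q
    exact hullC n hn q
  rw [latticePts_eq d hd ι, setEq,
    Set.ncard_image_of_injective _ (emb_inj d hd ι), Set.ncard_coe_finset,
    Finset.card_image_of_injective _ pairmap_inj, card_PCf]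

/-- For `d ≥ 3`, `ℤ`-linear `ι : ℤ³ → ℤ^{d−3}`, and the polytopes
`B_n = conv{i(1,−1,0), i(n,−n,0), i(0,0,−2n)}` and
`C_n = conv{i(−1,1,−1), i(−n,n,−n), i(0,0,−2n)}` in `ℝ^d`, for distinct `n, m ≥ 2`
no `φ ∈ GL(d,ℤ)` maps `ℤ^d ∩ B_n` bijectively onto `ℤ^d ∩ B_m`, and no
`φ ∈ GL(d,ℤ)` maps `ℤ^d ∩ C_n` bijectively onto `ℤ^d ∩ C_m`. -/
theorem stmt_12 (d : ℕ) (hd : 3 ≤ d) (ι : (Fin 3 → ℤ) →ₗ[ℤ] (Fin (d - 3) → ℤ))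
    (n m : ℕ) (hn : 2 ≤ n) (hm : 2 ≤ m) (hnm : n ≠ m) :
    (¬ ∃ φ : Matrix.GeneralLinearGroup (Fin d) ℤ,
        Set.BijOn (fun p => (φ : Matrix (Fin d) (Fin d) ℤ).mulVec p)
          (stmtLatticePts3 d ι ![1, -1, 0] ![(n : ℤ), -(n : ℤ), 0]
            ![0, 0, -(2 * (n : ℤ))])
          (stmtLatticePts3 d ι ![1, -1, 0] ![(m : ℤ), -(m : ℤ), 0]
            ![0, 0, -(2 * (m : ℤ))])) ∧
    (¬ ∃ φ : Matrix.GeneralLinearGroup (Fin d) ℤ,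
        Set.BijOn (fun p => (φ : Matrix (Fin d) (Fin d) ℤ).mulVec p)
          (stmtLatticePts3 d ι ![-1, 1, -1] ![-(n : ℤ), (n : ℤ), -(n : ℤ)]
            ![0, 0, -(2 * (n : ℤ))])
          (stmtLatticePts3 d ι ![-1, 1, -1] ![-(m : ℤ), (m : ℤ), -(m : ℤ)]
            ![0, 0, -(2 * (m : ℤ))])) := by
  constructor
  · rintro ⟨φ, hbij⟩
    have h1 := hbij.image_eq
    have h2 : (stmtLatticePts3 d ι ![1, -1, 0] ![(m : ℤ), -(m : ℤ), 0]
        ![0, 0, -(2 * (m : ℤ))]).ncard =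
        (stmtLatticePts3 d ι ![1, -1, 0] ![(n : ℤ), -(n : ℤ), 0]
        ![0, 0, -(2 * (n : ℤ))]).ncard := by
      rw [← h1, Set.ncard_image_of_injOn hbij.injOn]
    rw [ncard_B d hd ι m hm, ncard_B d hd ι n hn] at h2
    have : n ^ 2 = m ^ 2 := by omega
    exact hnm (Nat.pow_left_injective two_ne_zero this)
  · rintro ⟨φ, hbij⟩
    have h1 := hbij.image_eq
    have h2 : (stmtLatticePts3 d ι ![-1, 1, -1] ![-(m : ℤ), (m : ℤ), -(m : ℤ)]
        ![0, 0, -(2 * (m : ℤ))]).ncard =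
        (stmtLatticePts3 d ι ![-1, 1, -1] ![-(n : ℤ), (n : ℤ), -(n : ℤ)]
        ![0, 0, -(2 * (n : ℤ))]).ncard := by
      rw [← h1, Set.ncard_image_of_injOn hbij.injOn]
    rw [ncard_C d hd ι m hm, ncard_C d hd ι n hn] at h2
    have : n ^ 2 = m ^ 2 := by omega
    exact hnm (Nat.pow_left_injective two_ne_zero this)
end
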